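/- arXiv:2208.12357 — 7 statements merged into one kernel-verified Lean document; each statement's English description precedes it below -/
import Mathlib

section
/- Let A be an invertible m×m real matrix, A_s a p×p real matrix, G a p×m real matrix, B a q×p real matrix, and suppose S₁ = A_s + G A⁻¹ Gᵀ is invertible; set S₂ = B S₁⁻¹ Bᵀ. Then det K = (−1)^p · det A · det S₁ · det S₂ for the double saddle-point matrix K = [[A, Gᵀ, 0], [G, −A_s, Bᵀ], [0, B, 0]]; in particular, K is invertible if and only if S₂ is invertible. -/
/-! Eliminating the invertible block `A` leaves the 2×2 saddle-point matrix
`[[-S₁, Bᵀ], [B, 0]]` (Schur complement with respect to `A`); eliminating `-S₁` in turn leaves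
the Schur complement `0 - B (-S₁)⁻¹ Bᵀ = S₂`. -/

open Matrix

/-- Assemble a 3×3 block matrix from its nine blocks. -/
noncomputable def blk3 {m p q : Type*}
    (M11 : Matrix m m ℝ) (M12 : Matrix m p ℝ) (M13 : Matrix m q ℝ)
    (M21 : Matrix p m ℝ) (M22 : Matrix p p ℝ) (M23 : Matrix p q ℝ)
    (M31 : Matrix q m ℝ) (M32 : Matrix q p ℝ) (M33 : Matrix q q ℝ) :
    Matrix (m ⊕ (p ⊕ q)) (m ⊕ (p ⊕ q)) ℝ :=
  Matrix.fromBlocks M11 (Matrix.fromCols M12 M13)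
    (Matrix.fromRows M21 M31) (Matrix.fromBlocks M22 M23 M32 M33)

namespace Matrix

variable {m p q : Type*} [Fintype m] [DecidableEq m] [Fintype p] [DecidableEq p]
  [Fintype q] [DecidableEq q]

theorem det_blk3_zero₁₃_zero₃₁ (A : Matrix m m ℝ) [Invertible A] (C : Matrix m p ℝ)
    (G : Matrix p m ℝ) (D : Matrix p p ℝ) (E : Matrix p q ℝ) (F : Matrix q p ℝ)
    (H : Matrix q q ℝ) :
    (blk3 A C 0 G D E 0 F H).det = A.det * (fromBlocks (D - G * A⁻¹ * C) E F H).det := by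
  have hcorner : fromRows G 0 * A⁻¹ * fromCols C 0 =
      fromBlocks (G * A⁻¹ * C) 0 0 (0 : Matrix q q ℝ) := by
    rw [fromRows_mul, fromRows_mul_fromCols]
    simp
  rw [blk3, det_fromBlocks₁₁, invOf_eq_nonsing_inv, hcorner, sub_eq_add_neg, fromBlocks_neg,
    fromBlocks_add]
  simp only [neg_zero, add_zero, ← sub_eq_add_neg]

theorem det_fromBlocks_neg_zero₂₂ {α : Type*} [CommRing α] (S : Matrix p p α) [Invertible S]
    (E : Matrix p q α) (F : Matrix q p α) :
    (fromBlocks (-S) E F 0).det = (-1) ^ Fintype.card p * S.det * (F * S⁻¹ * E).det := by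
  have : Invertible (-S) := invertibleNeg S
  rw [det_fromBlocks₁₁, invOf_neg, invOf_eq_nonsing_inv, det_neg]
  simp only [Matrix.mul_neg, Matrix.neg_mul, zero_sub, neg_neg]

theorem det_blk3_doubleSaddlePoint (A : Matrix m m ℝ) [Invertible A] (As : Matrix p p ℝ)
    (G : Matrix p m ℝ) (B : Matrix q p ℝ) [Invertible (As + G * A⁻¹ * Gᵀ)] :
    (blk3 A Gᵀ 0 G (-As) Bᵀ 0 B 0).det = (-1) ^ Fintype.card p * A.det *
      (As + G * A⁻¹ * Gᵀ).det * (B * (As + G * A⁻¹ * Gᵀ)⁻¹ * Bᵀ).det := by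
  rw [det_blk3_zero₁₃_zero₃₁, ← neg_add', det_fromBlocks_neg_zero₂₂]
  ring

end Matrix

/-- `det K = (−1)^p · det A · det S₁ · det S₂`, and `K` is
invertible iff `S₂` is invertible. -/
theorem stmt1 (m p q : ℕ)
    (A : Matrix (Fin m) (Fin m) ℝ) (As : Matrix (Fin p) (Fin p) ℝ)
    (G : Matrix (Fin p) (Fin m) ℝ) (B : Matrix (Fin q) (Fin p) ℝ)
    (S1 : Matrix (Fin p) (Fin p) ℝ) (S2 : Matrix (Fin q) (Fin q) ℝ)
    (hS1def : S1 = As + G * A⁻¹ * Gᵀ) (hS2def : S2 = B * S1⁻¹ * Bᵀ)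
    (hA : IsUnit A) (hS1 : IsUnit S1)
    (K : Matrix (Fin m ⊕ (Fin p ⊕ Fin q)) (Fin m ⊕ (Fin p ⊕ Fin q)) ℝ)
    (hK : K = blk3 A Gᵀ 0 G (-As) Bᵀ 0 B 0) :
    K.det = (-1 : ℝ) ^ p * A.det * S1.det * S2.det ∧ (IsUnit K ↔ IsUnit S2) := by
  subst hK hS2def hS1def
  have := hA.invertible
  have := hS1.invertible
  have hdet := det_blk3_doubleSaddlePoint A As G B
  rw [Fintype.card_fin] at hdet
  refine ⟨hdet, ?_⟩
  have hA_det : A.det ≠ 0 := (isUnit_iff_isUnit_det A).mp hA |>.ne_zero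
  have hS1_det : (As + G * A⁻¹ * Gᵀ).det ≠ 0 := (isUnit_iff_isUnit_det _).mp hS1 |>.ne_zero
  simp only [isUnit_iff_isUnit_det, isUnit_iff_ne_zero, hdet, ne_eq, mul_eq_zero, hA_det, hS1_det,
    pow_eq_zero_iff', neg_eq_zero, one_ne_zero, false_and, or_false, false_or]
end

section
/- Let A be an invertible m×m real matrix, A_s a p×p real matrix, G a p×m real matrix, B a q×p real matrix, and suppose S₁ = A_s + G A⁻¹ Gᵀ and S₂ = B S₁⁻¹ Bᵀ are invertible. Define the block lower-triangular preconditioner M₃ = [[A, 0, 0], [G, −S₁, 0], [0, B, S₂]]. Then M₃⁻¹ K equals the unit upper block-triangular matrix U = [[I, A⁻¹ Gᵀ, 0], [0, I, −S₁⁻¹ Bᵀ], [0, 0, I]]; consequently (M₃⁻¹K − I)³ = 0 and every (complex) eigenvalue of M₃⁻¹K equals 1. -/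
open Matrix

/-! `M₃` factors `K` as `M₃ U`: multiplying the lower block-triangular `M₃` by the unit upper
block-triangular `U` reproduces `K` exactly because of the Schur complement identities
`G A⁻¹ Gᵀ - S₁ = -A_s` and `S₂ - B S₁⁻¹ Bᵀ = 0`. Since `M₃` is invertible (its determinant is
`det A · det (-S₁) · det S₂`), `M₃⁻¹ K = U`; `U - 1` is strictly upper block-triangular, hence
`(U - 1)³ = 0`, and an eigenvector `v` of `U` for `μ` satisfies `0 = (U - 1)³ v = (μ - 1)³ v`. -/

theorem eq_one_of_det_smul_one_sub_eq_zero {K n : Type*} [Field K] [Fintype n] [DecidableEq n]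
    {N : Matrix n n K} (hN : IsNilpotent (N - 1)) {μ : K} (hμ : (μ • 1 - N).det = 0) :
    μ = 1 := by
  obtain ⟨k, hk⟩ := hN
  obtain ⟨v, hv, hNv⟩ := exists_mulVec_eq_zero_iff.mpr hμ
  have heigen : (N - 1) *ᵥ v = (μ - 1) • v := by
    rw [sub_mulVec, smul_mulVec, one_mulVec] at hNv
    rw [sub_mulVec, one_mulVec, sub_smul, one_smul, ← sub_eq_zero.mp hNv]
  have hpow : ∀ j : ℕ, (N - 1) ^ j *ᵥ v = (μ - 1) ^ j • v := by
    intro j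
    induction j with
    | zero => simp
    | succ j ih => rw [pow_succ, ← mulVec_mulVec, heigen, mulVec_smul, ih, smul_smul, pow_succ']
  have hzero : (μ - 1) ^ k • v = 0 := by rw [← hpow, hk, zero_mulVec]
  exact sub_eq_zero.mp (IsNilpotent.eq_zero ⟨k, (smul_eq_zero.mp hzero).resolve_right hv⟩)

section Blocks

variable {m p q : Type*}

theorem blk3_unitUpper_sub_one [DecidableEq m] [DecidableEq p] [DecidableEq q]
    (X : Matrix m p ℝ) (Y : Matrix p q ℝ) :
    blk3 1 X 0 0 1 Y 0 0 1 - 1 = blk3 0 X 0 0 0 Y 0 0 0 := by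
  ext (i | i | i) (j | j | j) <;> simp [blk3, fromBlocks, fromCols, one_apply]

variable [Fintype m] [Fintype p] [Fintype q]

theorem blk3_mul (A11 : Matrix m m ℝ) (A12 : Matrix m p ℝ) (A13 : Matrix m q ℝ)
    (A21 : Matrix p m ℝ) (A22 : Matrix p p ℝ) (A23 : Matrix p q ℝ)
    (A31 : Matrix q m ℝ) (A32 : Matrix q p ℝ) (A33 : Matrix q q ℝ)
    (B11 : Matrix m m ℝ) (B12 : Matrix m p ℝ) (B13 : Matrix m q ℝ)
    (B21 : Matrix p m ℝ) (B22 : Matrix p p ℝ) (B23 : Matrix p q ℝ)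
    (B31 : Matrix q m ℝ) (B32 : Matrix q p ℝ) (B33 : Matrix q q ℝ) :
    blk3 A11 A12 A13 A21 A22 A23 A31 A32 A33 * blk3 B11 B12 B13 B21 B22 B23 B31 B32 B33 =
      blk3 (A11 * B11 + A12 * B21 + A13 * B31) (A11 * B12 + A12 * B22 + A13 * B32)
        (A11 * B13 + A12 * B23 + A13 * B33) (A21 * B11 + A22 * B21 + A23 * B31)
        (A21 * B12 + A22 * B22 + A23 * B32) (A21 * B13 + A22 * B23 + A23 * B33)
        (A31 * B11 + A32 * B21 + A33 * B31) (A31 * B12 + A32 * B22 + A33 * B32)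
        (A31 * B13 + A32 * B23 + A33 * B33) := by
  ext (i | i | i) (j | j | j) <;>
    simp [blk3, fromBlocks, fromCols, mul_apply, Fintype.sum_sum_type, add_assoc]

variable [DecidableEq m] [DecidableEq p] [DecidableEq q]

theorem blk3_strictUpper_pow_three (X : Matrix m p ℝ) (Y : Matrix p q ℝ) :
    blk3 0 X 0 0 0 Y 0 0 0 ^ 3 = 0 := by
  have hcube : blk3 0 X 0 0 0 Y 0 0 0 ^ 3 = blk3 (0 : Matrix m m ℝ) 0 0 0 (0 : Matrix p p ℝ) 0
      0 0 (0 : Matrix q q ℝ) := by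
    simp only [pow_succ, pow_zero, one_mul, blk3_mul, Matrix.zero_mul, Matrix.mul_zero,
      add_zero, zero_add]
  rw [hcube]
  ext (i | i | i) (j | j | j) <;> simp [blk3, fromBlocks, fromCols]

theorem det_blk3_lowerTriangular (A : Matrix m m ℝ) (X : Matrix p m ℝ) (S : Matrix p p ℝ)
    (Z : Matrix q m ℝ) (W : Matrix q p ℝ) (T : Matrix q q ℝ) :
    (blk3 A 0 0 X S 0 Z W T).det = A.det * (S.det * T.det) := by
  rw [blk3, fromCols_zero, det_fromBlocks_zero₁₂, det_fromBlocks_zero₁₂]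

theorem blk3_lowerTriangular_mul_unitUpper {A : Matrix m m ℝ} {As S1 : Matrix p p ℝ}
    {S2 : Matrix q q ℝ} {G : Matrix p m ℝ} {C : Matrix m p ℝ} {B : Matrix q p ℝ}
    {D : Matrix p q ℝ} (hA : IsUnit A) (hS1 : IsUnit S1)
    (hS1def : S1 = As + G * A⁻¹ * C) (hS2def : S2 = B * S1⁻¹ * D) :
    blk3 A 0 0 G (-S1) 0 0 B S2 * blk3 1 (A⁻¹ * C) 0 0 1 (-(S1⁻¹ * D)) 0 0 1 =
      blk3 A C 0 G (-As) D 0 B 0 := by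
  rw [isUnit_iff_isUnit_det] at hA hS1
  have hcorner : G * (A⁻¹ * C) - S1 = -As := by rw [hS1def, ← Matrix.mul_assoc]; abel
  have hfill : -(B * (S1⁻¹ * D)) + S2 = 0 := by
    rw [hS2def, Matrix.mul_assoc, neg_add_cancel]
  simp only [blk3_mul, Matrix.mul_one, Matrix.mul_zero, Matrix.zero_mul, add_zero, zero_add,
    Matrix.mul_neg, Matrix.neg_mul, neg_neg, neg_zero, mul_nonsing_inv_cancel_left _ _ hA,
    mul_nonsing_inv_cancel_left _ _ hS1, ← sub_eq_add_neg, hcorner, zero_sub]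
  rw [hfill]

end Blocks

/-- `M₃⁻¹ K` equals the unit upper block-triangular factor `U`,
`(M₃⁻¹K − I)³ = 0`, and every complex eigenvalue of `M₃⁻¹K` equals 1. -/
theorem stmt2 (m p q : ℕ)
    (A : Matrix (Fin m) (Fin m) ℝ) (As : Matrix (Fin p) (Fin p) ℝ)
    (G : Matrix (Fin p) (Fin m) ℝ) (B : Matrix (Fin q) (Fin p) ℝ)
    (S1 : Matrix (Fin p) (Fin p) ℝ) (S2 : Matrix (Fin q) (Fin q) ℝ)
    (hS1def : S1 = As + G * A⁻¹ * Gᵀ) (hS2def : S2 = B * S1⁻¹ * Bᵀ)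
    (hA : IsUnit A) (hS1 : IsUnit S1) (hS2 : IsUnit S2)
    (K M3 : Matrix (Fin m ⊕ (Fin p ⊕ Fin q)) (Fin m ⊕ (Fin p ⊕ Fin q)) ℝ)
    (hK : K = blk3 A Gᵀ 0 G (-As) Bᵀ 0 B 0)
    (hM3 : M3 = blk3 A 0 0 G (-S1) 0 0 B S2) :
    M3⁻¹ * K = blk3 1 (A⁻¹ * Gᵀ) 0 0 1 (-(S1⁻¹ * Bᵀ)) 0 0 1 ∧
    (M3⁻¹ * K - 1) ^ 3 = 0 ∧
    ∀ μ : ℂ,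
      (μ • (1 : Matrix (Fin m ⊕ (Fin p ⊕ Fin q)) (Fin m ⊕ (Fin p ⊕ Fin q)) ℂ) -
          (M3⁻¹ * K).map Complex.ofReal).det = 0 → μ = 1 := by
  have hM3unit : IsUnit M3.det := by
    rw [hM3, det_blk3_lowerTriangular]
    rw [isUnit_iff_isUnit_det] at hA hS2
    exact hA.mul (((isUnit_iff_isUnit_det _).mp hS1.neg).mul hS2)
  have hfactor : M3⁻¹ * K = blk3 1 (A⁻¹ * Gᵀ) 0 0 1 (-(S1⁻¹ * Bᵀ)) 0 0 1 := by
    rw [hK, ← blk3_lowerTriangular_mul_unitUpper hA hS1 hS1def hS2def, ← hM3,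
      nonsing_inv_mul_cancel_left _ _ hM3unit]
  have hcube : (M3⁻¹ * K - 1) ^ 3 = 0 := by
    rw [hfactor, blk3_unitUpper_sub_one, blk3_strictUpper_pow_three]
  refine ⟨hfactor, hcube, fun μ hμ => eq_one_of_det_smul_one_sub_eq_zero ?_ hμ⟩
  have hnil := IsNilpotent.map ⟨3, hcube⟩ Complex.ofRealHom.mapMatrix
  rwa [map_sub, map_one] at hnil
end

section
/- Let A be an invertible m×m real matrix, A_s a p×p real matrix, G a p×m real matrix, B a q×p real matrix, and suppose S₁ = A_s + G A⁻¹ Gᵀ and S₂ = B S₁⁻¹ Bᵀ are invertible. Define M₂ = [[A, 0, 0], [G, S₁, 0], [0, 0, S₂]]. Let λ ∈ ℝ satisfy λ² + λ − 1 = 0 (i.e., λ = (−1 ± √5)/2). Then for every nonzero z ∈ ℝ^q, the vector (x, y, z) with y = (1 + λ)⁻¹ S₁⁻¹ Bᵀ z and x = (λ − 1)⁻¹ A⁻¹ Gᵀ y is an eigenvector of M₂⁻¹K with eigenvalue λ; consequently each of the two eigenvalues (−1 ± √5)/2 of M₂⁻¹K has geometric multiplicity at least q. -/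
/-!
Write `v = (x, y, z)`. Since `M₂` is invertible, `M₂⁻¹ K v = λ v` is the pencil equation
`K v = λ M₂ v`, which splits into three block rows. From `λ² + λ = 1` we get `(1 + λ)⁻¹ = λ`,
hence `S₁ y = λ Bᵀ z`; with `A x = (λ - 1)⁻¹ Gᵀ y` and `G A⁻¹ Gᵀ = S₁ - A_s`, each block row
becomes a scalar identity in `λ` that is a multiple of `λ² + λ - 1`. The eigenvector depends
linearly on `z` and its last block is `z`, so the eigenvectors obtained this way span a
`q`-dimensional subspace of the eigenspace.
-/

open Matrix

theorem Sum.smul_elim {M α β γ : Type*} [SMul M γ] (c : M) (a : α → γ) (b : β → γ) :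
    c • Sum.elim a b = Sum.elim (c • a) (c • b) := by
  ext (i | i) <;> rfl

section Blocks

variable {m p q : Type*} [Fintype m] [Fintype p] [Fintype q]

theorem blk3_mulVec_sumElim
    (M11 : Matrix m m ℝ) (M12 : Matrix m p ℝ) (M13 : Matrix m q ℝ)
    (M21 : Matrix p m ℝ) (M22 : Matrix p p ℝ) (M23 : Matrix p q ℝ)
    (M31 : Matrix q m ℝ) (M32 : Matrix q p ℝ) (M33 : Matrix q q ℝ)
    (x : m → ℝ) (y : p → ℝ) (z : q → ℝ) :
    blk3 M11 M12 M13 M21 M22 M23 M31 M32 M33 *ᵥ Sum.elim x (Sum.elim y z) =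
      Sum.elim (M11 *ᵥ x + M12 *ᵥ y + M13 *ᵥ z)
        (Sum.elim (M21 *ᵥ x + M22 *ᵥ y + M23 *ᵥ z) (M31 *ᵥ x + M32 *ᵥ y + M33 *ᵥ z)) := by
  simp only [blk3, fromBlocks_mulVec, fromRows_mulVec, fromCols_mulVec_sumElim,
    Sum.elim_comp_inl, Sum.elim_comp_inr, Sum.elim_add_add, add_assoc]

theorem isUnit_blk3_of_upper_eq_zero [DecidableEq m] [DecidableEq p] [DecidableEq q]
    {M11 : Matrix m m ℝ} {M22 : Matrix p p ℝ} {M33 : Matrix q q ℝ} (h11 : IsUnit M11)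
    (h22 : IsUnit M22) (h33 : IsUnit M33) (M21 : Matrix p m ℝ) (M31 : Matrix q m ℝ)
    (M32 : Matrix q p ℝ) : IsUnit (blk3 M11 0 0 M21 M22 0 M31 M32 M33) := by
  rw [isUnit_iff_isUnit_det] at h11 h22 h33 ⊢
  rw [blk3, fromCols_zero, det_fromBlocks_zero₁₂, det_fromBlocks_zero₁₂]
  exact h11.mul (h22.mul h33)

end Blocks

theorem Matrix.inv_mul_mulVec_eq_smul_of_mulVec_eq {R n : Type*} [CommRing R] [Fintype n]
    [DecidableEq n] {M N : Matrix n n R} (hM : IsUnit M) {v : n → R} {c : R}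
    (h : N *ᵥ v = c • (M *ᵥ v)) : (M⁻¹ * N) *ᵥ v = c • v := by
  rw [← mulVec_mulVec, h, mulVec_smul, mulVec_mulVec,
    nonsing_inv_mul M ((isUnit_iff_isUnit_det M).mp hM), one_mulVec]

theorem Matrix.card_le_finrank_ker_mulVecLin {K : Type*} [Field K] {n q : Type*} [Fintype n]
    [Fintype q] (N : Matrix n n K) (P : Matrix n q K) (hP : Function.Injective P.mulVec)
    (hNP : ∀ z, N *ᵥ (P *ᵥ z) = 0) :
    Fintype.card q ≤ Module.finrank K (LinearMap.ker N.mulVecLin) := by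
  have hrange : LinearMap.range P.mulVecLin ≤ LinearMap.ker N.mulVecLin := by
    rintro _ ⟨z, rfl⟩
    exact hNP z
  calc Fintype.card q = Module.finrank K (LinearMap.range P.mulVecLin) := by
        rw [LinearMap.finrank_range_of_inj hP, Module.finrank_fintype_fun_eq_card]
    _ ≤ _ := Submodule.finrank_mono hrange

theorem saddlePoint_mulVec_eq_smul_precond_mulVec {m p q : Type*} [Fintype m] [Fintype p]
    [Fintype q] [DecidableEq m] [DecidableEq p]
    {A : Matrix m m ℝ} {As S1 : Matrix p p ℝ} {G : Matrix p m ℝ} {B : Matrix q p ℝ}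
    (hA : IsUnit A) (hS1 : IsUnit S1) (hS1def : S1 = As + G * A⁻¹ * Gᵀ)
    {lam : ℝ} (hlam : lam ^ 2 + lam - 1 = 0) (z : q → ℝ) {y : p → ℝ}
    (hy : y = (1 + lam)⁻¹ • ((S1⁻¹ * Bᵀ) *ᵥ z)) {x : m → ℝ}
    (hx : x = (lam - 1)⁻¹ • ((A⁻¹ * Gᵀ) *ᵥ y)) :
    blk3 A Gᵀ 0 G (-As) Bᵀ 0 B 0 *ᵥ Sum.elim x (Sum.elim y z) =
      lam • (blk3 A 0 0 G S1 0 0 0 (B * S1⁻¹ * Bᵀ) *ᵥ Sum.elim x (Sum.elim y z)) := by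
  have hlam1 : lam - 1 ≠ 0 := by
    intro h; rw [sub_eq_zero.mp h] at hlam; norm_num at hlam
  have hlam_inv : (1 + lam)⁻¹ = lam := inv_eq_of_mul_eq_one_left (by linear_combination hlam)
  have hAx : A *ᵥ x = (lam - 1)⁻¹ • (Gᵀ *ᵥ y) := by
    rw [hx, mulVec_smul, mulVec_mulVec, ← Matrix.mul_assoc,
      mul_nonsing_inv A ((isUnit_iff_isUnit_det A).mp hA), Matrix.one_mul]
  rw [hlam_inv] at hy
  have hS1y : S1 *ᵥ y = lam • (Bᵀ *ᵥ z) := by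
    rw [hy, mulVec_smul, mulVec_mulVec, ← Matrix.mul_assoc,
      mul_nonsing_inv S1 ((isUnit_iff_isUnit_det S1).mp hS1), Matrix.one_mul]
  have hGx : G *ᵥ x = (lam - 1)⁻¹ • ((S1 - As) *ᵥ y) := by
    rw [hx, mulVec_smul, mulVec_mulVec, hS1def, ← Matrix.mul_assoc, add_sub_cancel_left]
  have hBy : B *ᵥ y = lam • ((B * S1⁻¹ * Bᵀ) *ᵥ z) := by
    rw [hy, mulVec_smul, mulVec_mulVec, Matrix.mul_assoc]
  simp only [blk3_mulVec_sumElim, zero_mulVec, add_zero, zero_add, Sum.smul_elim]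
  refine congrArg₂ Sum.elim ?_ (congrArg₂ Sum.elim ?_ ?_)
  · rw [hAx]; match_scalars; field_simp; ring
  · rw [hGx, sub_mulVec, neg_mulVec, hS1y]
    match_scalars
    · field_simp
      linear_combination (1 - lam) * hlam
    · field_simp
      ring
  · exact hBy

theorem precond_inv_mul_saddlePoint_mulVec_eq_smul {m p q : Type*} [Fintype m]
    [Fintype p] [Fintype q] [DecidableEq m] [DecidableEq p] [DecidableEq q]
    {A : Matrix m m ℝ} {As S1 : Matrix p p ℝ} {G : Matrix p m ℝ} {B : Matrix q p ℝ}
    (hA : IsUnit A) (hS1 : IsUnit S1) (hS2 : IsUnit (B * S1⁻¹ * Bᵀ))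
    (hS1def : S1 = As + G * A⁻¹ * Gᵀ) {lam : ℝ} (hlam : lam ^ 2 + lam - 1 = 0) (z : q → ℝ)
    {y : p → ℝ} (hy : y = (1 + lam)⁻¹ • ((S1⁻¹ * Bᵀ) *ᵥ z)) {x : m → ℝ}
    (hx : x = (lam - 1)⁻¹ • ((A⁻¹ * Gᵀ) *ᵥ y)) :
    ((blk3 A 0 0 G S1 0 0 0 (B * S1⁻¹ * Bᵀ))⁻¹ * blk3 A Gᵀ 0 G (-As) Bᵀ 0 B 0) *ᵥ
      Sum.elim x (Sum.elim y z) = lam • Sum.elim x (Sum.elim y z) :=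
  inv_mul_mulVec_eq_smul_of_mulVec_eq (isUnit_blk3_of_upper_eq_zero hA hS1 hS2 G 0 0)
    (saddlePoint_mulVec_eq_smul_precond_mulVec hA hS1 hS1def hlam z hy hx)

/-- for `λ` with `λ² + λ − 1 = 0` and any nonzero `z`, the vector
`(x, y, z)` with `y = (1+λ)⁻¹ S₁⁻¹ Bᵀ z` and `x = (λ−1)⁻¹ A⁻¹ Gᵀ y` is an
eigenvector of `M₂⁻¹K` with eigenvalue `λ`; hence the geometric multiplicity of
each of the eigenvalues `(−1 ± √5)/2` is at least `q`. -/
theorem stmt5 (m p q : ℕ)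
    (A : Matrix (Fin m) (Fin m) ℝ) (As : Matrix (Fin p) (Fin p) ℝ)
    (G : Matrix (Fin p) (Fin m) ℝ) (B : Matrix (Fin q) (Fin p) ℝ)
    (S1 : Matrix (Fin p) (Fin p) ℝ) (S2 : Matrix (Fin q) (Fin q) ℝ)
    (hS1def : S1 = As + G * A⁻¹ * Gᵀ) (hS2def : S2 = B * S1⁻¹ * Bᵀ)
    (hA : IsUnit A) (hS1 : IsUnit S1) (hS2 : IsUnit S2)
    (K M2 : Matrix (Fin m ⊕ (Fin p ⊕ Fin q)) (Fin m ⊕ (Fin p ⊕ Fin q)) ℝ)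
    (hK : K = blk3 A Gᵀ 0 G (-As) Bᵀ 0 B 0)
    (hM2 : M2 = blk3 A 0 0 G S1 0 0 0 S2)
    (lam : ℝ) (hlam : lam ^ 2 + lam - 1 = 0) :
    (∀ z : Fin q → ℝ, z ≠ 0 →
      ∀ y : Fin p → ℝ, y = (1 + lam)⁻¹ • ((S1⁻¹ * Bᵀ) *ᵥ z) →
      ∀ x : Fin m → ℝ, x = (lam - 1)⁻¹ • ((A⁻¹ * Gᵀ) *ᵥ y) →
        Sum.elim x (Sum.elim y z) ≠ 0 ∧
        (M2⁻¹ * K) *ᵥ Sum.elim x (Sum.elim y z) = lam • Sum.elim x (Sum.elim y z)) ∧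
    q ≤ Module.finrank ℝ (LinearMap.ker (M2⁻¹ * K - lam • 1).mulVecLin) := by
  subst hK hM2 hS2def
  have heig := fun z y hy x hx =>
    precond_inv_mul_saddlePoint_mulVec_eq_smul hA hS1 hS2 hS1def hlam z (y := y) hy (x := x) hx
  refine ⟨fun z hz y hy x hx => ⟨fun h => hz (funext fun i => by
    simpa using congrFun h (Sum.inr (Sum.inr i))), heig z y hy x hx⟩, ?_⟩
  set Y : Matrix (Fin p) (Fin q) ℝ := (1 + lam)⁻¹ • (S1⁻¹ * Bᵀ)
  set X : Matrix (Fin m) (Fin q) ℝ := (lam - 1)⁻¹ • (A⁻¹ * Gᵀ * Y)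
  set P := fromRows X (fromRows Y (1 : Matrix (Fin q) (Fin q) ℝ))
  have hP : ∀ z, P *ᵥ z = Sum.elim (X *ᵥ z) (Sum.elim (Y *ᵥ z) z) := by
    intro z
    rw [fromRows_mulVec, fromRows_mulVec, one_mulVec]
  have hinj : Function.Injective P.mulVec := fun z z' h =>
    funext fun i => by simpa [hP] using congrFun h (Sum.inr (Sum.inr i))
  refine (Fintype.card_fin q).ge.trans (card_le_finrank_ker_mulVecLin _ P hinj fun z => ?_)
  rw [sub_mulVec, smul_mulVec, one_mulVec, hP, sub_eq_zero]
  exact heig z _ (smul_mulVec _ _ _) _ (by rw [smul_mulVec, mulVec_mulVec])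
end

section
/- Let A be an invertible m×m real matrix, A_s a p×p real matrix, G a p×m real matrix, B a q×p real matrix, and suppose S₁ = A_s + G A⁻¹ Gᵀ and S₂ = B S₁⁻¹ Bᵀ are invertible (so q ≤ p). Define the preconditioner M̃₂ = [[A, 0, 0], [G, −S₁, 0], [0, 0, S₂]]. Then the characteristic polynomial of M̃₂⁻¹K is det(λI − M̃₂⁻¹K) = (λ − 1)^{m+p−q} · (λ² − λ + 1)^q; equivalently, the eigenvalue 1 of M̃₂⁻¹K has algebraic multiplicity m + p − q, and the complex eigenvalues (1 ± i√3)/2 each have algebraic multiplicity q. -/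
open Matrix Polynomial

/-!
With `W = A⁻¹Gᵀ`, `Y = S₁⁻¹Bᵀ` and `Z = S₂⁻¹B` one has `K = M̃₂ T` for
`T = [[I, W, 0], [0, I, -Y], [0, Z, 0]]`, so `M̃₂⁻¹K = T`. The matrix `T` is block upper
triangular with diagonal blocks `I` and `N = [[I, -Y], [Z, 0]]`, and `ZY = I` by the definition
of `S₂`, which also forces `q ≤ p`. Now `N - I = [[Y, 0], [0, I]] * [[0, -I], [Z, -I]]` factors
through a space of dimension `2q`; the product in the other order is `[[0, -I], [I, -I]]`, with
characteristic polynomial `(λ² + λ + 1)^q`. Hence `χ_{N-I}(λ) = λ^(p-q) (λ² + λ + 1)^q`, and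
`χ_N(λ) = χ_{N-I}(λ - 1)`.
-/

namespace Matrix

variable {R : Type*} [CommRing R] {ι κ : Type*} [Fintype ι] [Fintype κ]

theorem card_le_card_of_mul_eq_one [DecidableEq κ] [Nontrivial R] {Z : Matrix κ ι R}
    {Y : Matrix ι κ R} (h : Z * Y = 1) : Fintype.card κ ≤ Fintype.card ι := by
  have hrank := rank_mul_le_left Z Y
  rw [h, rank_one] at hrank
  exact hrank.trans Z.rank_le_card_width

variable [DecidableEq ι] [DecidableEq κ]

theorem det_fromBlocks_smul_one₂₂_mul_pow (A : Matrix ι ι R) (B : Matrix ι κ R)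
    (C : Matrix κ ι R) (b : R) :
    (fromBlocks A B C (b • 1)).det * b ^ Fintype.card ι
      = (b • A - B * C).det * b ^ Fintype.card κ := by
  have hmul : fromBlocks A B C (b • 1) * fromBlocks (b • 1) 0 (-C) 1
      = fromBlocks (b • A - B * C) B 0 (b • 1) := by
    simp [fromBlocks_multiply, sub_eq_add_neg]
  simpa [det_fromBlocks_zero₁₂, det_fromBlocks_zero₂₁, det_smul] using congrArg det hmul

theorem charpoly_fromBlocks_zero_neg_one_one_neg_one :
    (fromBlocks 0 (-1) 1 (-1) : Matrix (κ ⊕ κ) (κ ⊕ κ) R).charpoly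
      = ((X : R[X]) ^ 2 + X + 1) ^ Fintype.card κ := by
  have hchar : charmatrix (fromBlocks 0 (-1) 1 (-1) : Matrix (κ ⊕ κ) (κ ⊕ κ) R)
      = fromBlocks ((X : R[X]) • 1) 1 (-1) ((X + 1 : R[X]) • 1) := by
    rw [charmatrix_fromBlocks]
    congr 1 <;> ext i j <;> by_cases h : i = j <;> simp [h, one_apply, smul_apply]
  have hdet := det_fromBlocks_smul_one₂₂_mul_pow ((X : R[X]) • 1 : Matrix κ κ R[X])
    (1 : Matrix κ κ R[X]) (-1) (X + 1)
  have hscalar : ((X + 1 : R[X]) * X) • (1 : Matrix κ κ R[X]) + 1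
      = (X ^ 2 + X + 1 : R[X]) • 1 := by
    module
  rw [← hchar, smul_smul, Matrix.one_mul, sub_neg_eq_add, hscalar, det_smul, det_one,
    mul_one] at hdet
  exact ((monic_X_add_C (1 : R)).pow _).isRegular.right hdet

theorem charpoly_fromBlocks_one_neg_of_mul_eq_one [Nontrivial R] {Y : Matrix ι κ R}
    {Z : Matrix κ ι R} (hZY : Z * Y = 1) :
    (fromBlocks 1 (-Y) Z 0).charpoly
      = ((X : R[X]) - 1) ^ (Fintype.card ι - Fintype.card κ)
        * (X ^ 2 - X + 1) ^ Fintype.card κ := by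
  set N := fromBlocks 1 (-Y) Z 0
  set U : Matrix (ι ⊕ κ) (κ ⊕ κ) R := fromBlocks Y 0 0 1
  set V : Matrix (κ ⊕ κ) (ι ⊕ κ) R := fromBlocks 0 (-1) Z (-1)
  have hfactor : N - scalar _ 1 = U * V := by
    rw [map_one, ← fromBlocks_one, sub_eq_add_neg, fromBlocks_neg, fromBlocks_add,
      fromBlocks_multiply]
    simp
  have hswap : V * U = fromBlocks 0 (-1) 1 (-1) := by
    simp [U, V, fromBlocks_multiply, hZY]
  have hle := card_le_card_of_mul_eq_one hZY
  have hshift : (N - scalar _ 1).charpoly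
      = X ^ (Fintype.card ι - Fintype.card κ) * (X ^ 2 + X + 1) ^ Fintype.card κ := by
    rw [hfactor, charpoly_mul_comm_of_le _ _ (by simp only [Fintype.card_sum]; omega), hswap,
      charpoly_fromBlocks_zero_neg_one_one_neg_one]
    congr 2
    simp only [Fintype.card_sum]
    omega
  calc N.charpoly = (N.charpoly.comp (X + C 1)).comp (X - C 1) := by simp [comp_assoc]
    _ = _ := by
      rw [← charpoly_sub_scalar, hshift]
      simp only [mul_comp, pow_comp, add_comp, X_comp, one_comp, C_1]
      ring

end Matrix

section Blk3

variable {m p q : Type*} [Fintype m] [Fintype p] [Fintype q]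

theorem blk3_mul_s7
    (M11 : Matrix m m ℝ) (M12 : Matrix m p ℝ) (M13 : Matrix m q ℝ)
    (M21 : Matrix p m ℝ) (M22 : Matrix p p ℝ) (M23 : Matrix p q ℝ)
    (M31 : Matrix q m ℝ) (M32 : Matrix q p ℝ) (M33 : Matrix q q ℝ)
    (N11 : Matrix m m ℝ) (N12 : Matrix m p ℝ) (N13 : Matrix m q ℝ)
    (N21 : Matrix p m ℝ) (N22 : Matrix p p ℝ) (N23 : Matrix p q ℝ)
    (N31 : Matrix q m ℝ) (N32 : Matrix q p ℝ) (N33 : Matrix q q ℝ) :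
    blk3 M11 M12 M13 M21 M22 M23 M31 M32 M33 * blk3 N11 N12 N13 N21 N22 N23 N31 N32 N33
      = blk3 (M11 * N11 + (M12 * N21 + M13 * N31)) (M11 * N12 + (M12 * N22 + M13 * N32))
          (M11 * N13 + (M12 * N23 + M13 * N33))
          (M21 * N11 + (M22 * N21 + M23 * N31)) (M21 * N12 + (M22 * N22 + M23 * N32))
          (M21 * N13 + (M22 * N23 + M23 * N33))
          (M31 * N11 + (M32 * N21 + M33 * N31)) (M31 * N12 + (M32 * N22 + M33 * N32))
          (M31 * N13 + (M32 * N23 + M33 * N33)) := by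
  ext (i | i | i) (j | j | j) <;> simp [blk3, mul_apply, Fintype.sum_sum_type]

variable [DecidableEq m] [DecidableEq p] [DecidableEq q]

theorem det_blk3_zero₁₂_zero₁₃_zero₂₃ (M11 : Matrix m m ℝ) (M21 : Matrix p m ℝ)
    (M22 : Matrix p p ℝ) (M31 : Matrix q m ℝ) (M32 : Matrix q p ℝ) (M33 : Matrix q q ℝ) :
    (blk3 M11 0 0 M21 M22 0 M31 M32 M33).det = M11.det * (M22.det * M33.det) := by
  rw [blk3, fromCols_zero, det_fromBlocks_zero₁₂, det_fromBlocks_zero₁₂]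

theorem charpoly_blk3_zero₂₁_zero₃₁ (M11 : Matrix m m ℝ) (M12 : Matrix m p ℝ)
    (M13 : Matrix m q ℝ) (M22 : Matrix p p ℝ) (M23 : Matrix p q ℝ) (M32 : Matrix q p ℝ)
    (M33 : Matrix q q ℝ) :
    (blk3 M11 M12 M13 0 M22 M23 0 M32 M33).charpoly
      = M11.charpoly * (fromBlocks M22 M23 M32 M33).charpoly := by
  rw [blk3, fromRows_zero, charpoly_fromBlocks_zero₂₁]

theorem blk3_saddlePoint_eq_mul {A : Matrix m m ℝ} {As S1 : Matrix p p ℝ} {G : Matrix p m ℝ}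
    {B : Matrix q p ℝ} {S2 : Matrix q q ℝ} (hS1def : S1 = As + G * A⁻¹ * Gᵀ)
    (hA : IsUnit A) (hS1 : IsUnit S1) (hS2 : IsUnit S2) :
    blk3 A Gᵀ 0 G (-As) Bᵀ 0 B 0
      = blk3 A 0 0 G (-S1) 0 0 0 S2
        * blk3 1 (A⁻¹ * Gᵀ) 0 0 1 (-(S1⁻¹ * Bᵀ)) 0 (S2⁻¹ * B) 0 := by
  rw [isUnit_iff_isUnit_det] at hA hS1 hS2
  rw [blk3_mul_s7]
  congr 1 <;> simp [mul_nonsing_inv_cancel_left _ _ hA, mul_nonsing_inv_cancel_left _ _ hS1,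
    mul_nonsing_inv_cancel_left _ _ hS2]
  rw [hS1def, Matrix.mul_assoc]
  abel

end Blk3

/-- the characteristic polynomial of `M̃₂⁻¹ K` is
`(λ − 1)^(m+p−q) (λ² − λ + 1)^q`. -/
theorem stmt7 (m p q : ℕ)
    (A : Matrix (Fin m) (Fin m) ℝ) (As : Matrix (Fin p) (Fin p) ℝ)
    (G : Matrix (Fin p) (Fin m) ℝ) (B : Matrix (Fin q) (Fin p) ℝ)
    (S1 : Matrix (Fin p) (Fin p) ℝ) (S2 : Matrix (Fin q) (Fin q) ℝ)
    (hS1def : S1 = As + G * A⁻¹ * Gᵀ) (hS2def : S2 = B * S1⁻¹ * Bᵀ)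
    (hA : IsUnit A) (hS1 : IsUnit S1) (hS2 : IsUnit S2)
    (K M2t : Matrix (Fin m ⊕ (Fin p ⊕ Fin q)) (Fin m ⊕ (Fin p ⊕ Fin q)) ℝ)
    (hK : K = blk3 A Gᵀ 0 G (-As) Bᵀ 0 B 0)
    (hM2t : M2t = blk3 A 0 0 G (-S1) 0 0 0 S2) :
    (M2t⁻¹ * K).charpoly = (X - 1) ^ (m + p - q) * (X ^ 2 - X + 1) ^ q := by
  have hZY : (S2⁻¹ * B) * (S1⁻¹ * Bᵀ) = 1 := by
    rw [Matrix.mul_assoc, ← Matrix.mul_assoc B, ← hS2def,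
      nonsing_inv_mul _ ((isUnit_iff_isUnit_det _).mp hS2)]
  have hqp : q ≤ p := by simpa using card_le_card_of_mul_eq_one hZY
  have hM2t_det : IsUnit M2t.det := by
    rw [hM2t, det_blk3_zero₁₂_zero₁₃_zero₂₃, det_neg]
    rw [isUnit_iff_isUnit_det] at hA hS1 hS2
    exact hA.mul (((isUnit_one.neg.pow _).mul hS1).mul hS2)
  rw [hK, blk3_saddlePoint_eq_mul hS1def hA hS1 hS2, ← hM2t,
    nonsing_inv_mul_cancel_left _ _ hM2t_det, charpoly_blk3_zero₂₁_zero₃₁, charpoly_one,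
    charpoly_fromBlocks_one_neg_of_mul_eq_one hZY]
  simp only [Fintype.card_fin]
  rw [← mul_assoc, ← pow_add, Nat.add_sub_assoc hqp]
end

section
/- Let A be an invertible m×m real matrix, A_s a p×p real matrix, G a p×m real matrix, B a q×p real matrix, and suppose S₁ = A_s + G A⁻¹ Gᵀ and S₂ = B S₁⁻¹ Bᵀ are invertible. Define the block-diagonal preconditioner M₁ = blockdiag(A, S₁, S₂). Then for every nonzero x ∈ ℝ^m with G x = 0, the vector (x, 0, 0) is an eigenvector of M₁⁻¹K with eigenvalue 1; consequently the geometric multiplicity of the eigenvalue 1 of M₁⁻¹K is at least m − rank(G), the nullity of G. -/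
/-! On vectors `(x, 0, 0)` with `G x = 0` the matrices `K` and `M₁` agree: both send it to
`(A x, 0, 0)`. Hence `M₁⁻¹ K` fixes every such vector, and extension by zero embeds `ker G`
into the `1`-eigenspace of `M₁⁻¹ K`, whose dimension is therefore at least `m − rank G`. -/

open Matrix

section Blocks

variable {m p q : Type*} [Fintype m] [Fintype p] [Fintype q]

theorem isUnit_blk3_diag [DecidableEq m] [DecidableEq p] [DecidableEq q]
    {A : Matrix m m ℝ} {S : Matrix p p ℝ} {T : Matrix q q ℝ}
    (hA : IsUnit A) (hS : IsUnit S) (hT : IsUnit T) :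
    IsUnit (blk3 A 0 0 0 S 0 0 0 T) := by
  rw [blk3, fromCols_zero, fromRows_zero]
  exact isUnit_fromBlocks_zero₂₁.2 ⟨hA, isUnit_fromBlocks_zero₂₁.2 ⟨hS, hT⟩⟩

theorem blk3_mulVec_sumElim_zero
    (M11 : Matrix m m ℝ) (M12 : Matrix m p ℝ) (M13 : Matrix m q ℝ)
    (M21 : Matrix p m ℝ) (M22 : Matrix p p ℝ) (M23 : Matrix p q ℝ)
    (M31 : Matrix q m ℝ) (M32 : Matrix q p ℝ) (M33 : Matrix q q ℝ) (x : m → ℝ) :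
    blk3 M11 M12 M13 M21 M22 M23 M31 M32 M33 *ᵥ Sum.elim x 0 =
      Sum.elim (M11 *ᵥ x) (Sum.elim (M21 *ᵥ x) (M31 *ᵥ x)) := by
  rw [blk3, fromBlocks_mulVec, fromRows_mulVec, Sum.elim_comp_inl, Sum.elim_comp_inr, mulVec_zero,
    mulVec_zero, add_zero, add_zero]

end Blocks

theorem Matrix.nonsing_inv_mul_mulVec_eq_self {n R : Type*} [Fintype n] [DecidableEq n]
    [CommRing R] {M K : Matrix n n R} (hM : IsUnit M) {v : n → R} (h : K *ᵥ v = M *ᵥ v) :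
    (M⁻¹ * K) *ᵥ v = v := by
  rw [← mulVec_mulVec, h, mulVec_mulVec, nonsing_inv_mul _ ((isUnit_iff_isUnit_det M).1 hM),
    one_mulVec]

theorem Matrix.finrank_ker_mulVecLin {m n K : Type*} [Fintype m] [Fintype n] [Field K]
    (A : Matrix m n K) :
    Module.finrank K (LinearMap.ker A.mulVecLin) = Fintype.card n - A.rank := by
  have h := A.mulVecLin.finrank_range_add_finrank_ker
  rw [Module.finrank_fintype_fun_eq_card] at h
  rw [Matrix.rank]
  omega

theorem Submodule.finrank_le_finrank_of_injective_of_mapsTo {K V W : Type*} [DivisionRing K]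
    [AddCommGroup V] [Module K V] [AddCommGroup W] [Module K W]
    {P : Submodule K V} {Q : Submodule K W} [FiniteDimensional K Q] {f : V →ₗ[K] W}
    (hf : Function.Injective f) (hPQ : ∀ x ∈ P, f x ∈ Q) :
    Module.finrank K P ≤ Module.finrank K Q :=
  LinearMap.finrank_le_finrank_of_injective (f := (f ∘ₗ P.subtype).codRestrict Q fun x ↦ hPQ x x.2)
    fun _ _ h ↦ Subtype.ext (hf (congrArg Subtype.val h))

theorem stmt9_general (m p q : ℕ)
    (A : Matrix (Fin m) (Fin m) ℝ) (As : Matrix (Fin p) (Fin p) ℝ)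
    (G : Matrix (Fin p) (Fin m) ℝ) (B : Matrix (Fin q) (Fin p) ℝ)
    (S1 : Matrix (Fin p) (Fin p) ℝ) (S2 : Matrix (Fin q) (Fin q) ℝ)
    (hA : IsUnit A) (hS1 : IsUnit S1) (hS2 : IsUnit S2)
    (K M1 : Matrix (Fin m ⊕ (Fin p ⊕ Fin q)) (Fin m ⊕ (Fin p ⊕ Fin q)) ℝ)
    (hK : K = blk3 A Gᵀ 0 G (-As) Bᵀ 0 B 0)
    (hM1 : M1 = blk3 A 0 0 0 S1 0 0 0 S2) :
    (∀ x : Fin m → ℝ, x ≠ 0 → G *ᵥ x = 0 →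
      (M1⁻¹ * K) *ᵥ Sum.elim x (0 : Fin p ⊕ Fin q → ℝ) =
        (1 : ℝ) • Sum.elim x (0 : Fin p ⊕ Fin q → ℝ) ∧
      Sum.elim x (0 : Fin p ⊕ Fin q → ℝ) ≠ 0) ∧
    m - G.rank ≤
      Module.finrank ℝ (LinearMap.ker (M1⁻¹ * K - (1 : ℝ) • 1).mulVecLin) := by
  have hM1unit : IsUnit M1 := hM1 ▸ isUnit_blk3_diag hA hS1 hS2
  have fixed : ∀ x, G *ᵥ x = 0 →
      (M1⁻¹ * K) *ᵥ Sum.elim x (0 : Fin p ⊕ Fin q → ℝ) = Sum.elim x 0 := fun x hx ↦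
    nonsing_inv_mul_mulVec_eq_self hM1unit <| by
      simp only [hK, hM1, blk3_mulVec_sumElim_zero, hx, zero_mulVec]
  let extendByZero : (Fin m → ℝ) →ₗ[ℝ] (Fin m ⊕ (Fin p ⊕ Fin q) → ℝ) :=
    (LinearEquiv.sumArrowLequivProdArrow _ _ ℝ ℝ).symm.toLinearMap ∘ₗ LinearMap.inl ℝ _ _
  have extendByZero_injective : Function.Injective extendByZero := fun x y h ↦
    funext fun i ↦ congrFun h (Sum.inl i)
  refine ⟨fun x hx0 hx ↦ ⟨by rw [fixed x hx, one_smul], fun h ↦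
    hx0 (extendByZero_injective (h.trans (map_zero extendByZero).symm))⟩, ?_⟩
  calc m - G.rank = Module.finrank ℝ (LinearMap.ker G.mulVecLin) := by
        rw [finrank_ker_mulVecLin, Fintype.card_fin]
    _ ≤ _ := Submodule.finrank_le_finrank_of_injective_of_mapsTo extendByZero_injective
        fun x hx ↦ by
          change (M1⁻¹ * K - (1 : ℝ) • 1) *ᵥ Sum.elim x 0 = 0
          rw [sub_mulVec, fixed x hx, one_smul, one_mulVec, sub_self]

/-- for every nonzero `x` with `G x = 0`, the vector `(x, 0, 0)`
is an eigenvector of `M₁⁻¹K` with eigenvalue `1`; hence the geometric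
multiplicity of the eigenvalue `1` is at least `m − rank G`. -/
theorem stmt9 (m p q : ℕ)
    (A : Matrix (Fin m) (Fin m) ℝ) (As : Matrix (Fin p) (Fin p) ℝ)
    (G : Matrix (Fin p) (Fin m) ℝ) (B : Matrix (Fin q) (Fin p) ℝ)
    (S1 : Matrix (Fin p) (Fin p) ℝ) (S2 : Matrix (Fin q) (Fin q) ℝ)
    (hS1def : S1 = As + G * A⁻¹ * Gᵀ) (hS2def : S2 = B * S1⁻¹ * Bᵀ)
    (hA : IsUnit A) (hS1 : IsUnit S1) (hS2 : IsUnit S2)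
    (K M1 : Matrix (Fin m ⊕ (Fin p ⊕ Fin q)) (Fin m ⊕ (Fin p ⊕ Fin q)) ℝ)
    (hK : K = blk3 A Gᵀ 0 G (-As) Bᵀ 0 B 0)
    (hM1 : M1 = blk3 A 0 0 0 S1 0 0 0 S2) :
    (∀ x : Fin m → ℝ, x ≠ 0 → G *ᵥ x = 0 →
      (M1⁻¹ * K) *ᵥ Sum.elim x (0 : Fin p ⊕ Fin q → ℝ) =
        (1 : ℝ) • Sum.elim x (0 : Fin p ⊕ Fin q → ℝ) ∧
      Sum.elim x (0 : Fin p ⊕ Fin q → ℝ) ≠ 0) ∧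
    m - G.rank ≤
      Module.finrank ℝ (LinearMap.ker (M1⁻¹ * K - (1 : ℝ) • 1).mulVecLin) :=
  stmt9_general m p q A As G B S1 S2 hA hS1 hS2 K M1 hK hM1
end

section
/- Let C be a symmetric positive definite k×k real matrix, D a symmetric l×l real matrix, and M an l×k real matrix such that D − 2·M C⁻¹ Mᵀ is positive definite. Then every (complex) eigenvalue of the block matrix E = [[C, 2Mᵀ], [M, D]] is real and positive. -/
/-!
Conjugating by the diagonal scaling `diag(√2 • 1, 1)` turns `E` into the symmetric matrix
`F = [[C, √2 Mᵀ], [√2 M, D]]`, so `E` and `F` have the same characteristic polynomial. The Schur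
complement of `C` in `F` is `D - 2 M C⁻¹ Mᵀ`, hence `F` is positive definite, and the roots of its
characteristic polynomial are its eigenvalues, which are real and positive.
-/

open Matrix Polynomial
open scoped ComplexOrder

namespace Matrix

variable {m n : Type*} [Fintype m] [Fintype n] [DecidableEq m] [DecidableEq n]

theorem PosDef.fromBlocks₁₁_of_posDef_schur {𝕜 : Type*} [RCLike 𝕜] {A : Matrix m m 𝕜}
    (B : Matrix m n 𝕜) (D : Matrix n n 𝕜) (hA : A.PosDef) (hS : (D - Bᴴ * A⁻¹ * B).PosDef) :
    (fromBlocks A B Bᴴ D).PosDef := by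
  have := hA.isUnit.invertible
  refine ((PosDef.fromBlocks₁₁ B D hA).mpr hS.posSemidef).posDef_iff_det_ne_zero.mpr ?_
  rw [det_fromBlocks₁₁, invOf_eq_nonsing_inv]
  exact mul_ne_zero hA.det_pos.ne' hS.det_pos.ne'

theorem charpoly_fromBlocks_smul_smul_inv {K : Type*} [Field K] {a : K} (ha : a ≠ 0)
    (A : Matrix m m K) (B : Matrix m n K) (C : Matrix n m K) (D : Matrix n n K) :
    (fromBlocks A (a • B) (a⁻¹ • C) D).charpoly = (fromBlocks A B C D).charpoly := by
  set S : Matrix (m ⊕ n) (m ⊕ n) K := fromBlocks (a • 1) 0 0 1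
  set T : Matrix (m ⊕ n) (m ⊕ n) K := fromBlocks (a⁻¹ • 1) 0 0 1
  have hconj : fromBlocks A (a • B) (a⁻¹ • C) D = S * (fromBlocks A B C D * T) := by
    simp [S, T, fromBlocks_multiply, smul_smul, ha]
  have hTS : T * S = 1 := by
    simp [S, T, fromBlocks_multiply, smul_smul, ha]
  rw [hconj, charpoly_mul_comm, mul_assoc, hTS, mul_one]

theorem PosDef.exists_pos_eq_of_isRoot_charpoly_map {F : Matrix n n ℝ} (hF : F.PosDef) {μ : ℂ}
    (hμ : (F.charpoly.map Complex.ofRealHom).IsRoot μ) : ∃ r : ℝ, 0 < r ∧ μ = r := by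
  rw [hF.isHermitian.charpoly_eq, Polynomial.map_prod] at hμ
  simp only [IsRoot, eval_prod, Finset.prod_eq_zero_iff] at hμ
  obtain ⟨i, -, hi⟩ := hμ
  refine ⟨_, hF.eigenvalues_pos i, ?_⟩
  simpa [sub_eq_zero] using hi

theorem det_smul_one_sub_map_eq_eval_charpoly {R S : Type*} [CommRing R] [CommRing S]
    (A : Matrix n n R) (f : R →+* S) (μ : S) :
    (μ • (1 : Matrix n n S) - A.map f).det = (A.charpoly.map f).eval μ := by
  rw [← charpoly_map, eval_charpoly, scalar_apply, smul_one_eq_diagonal]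

end Matrix

theorem stmt14_general (k l : ℕ)
    (C : Matrix (Fin k) (Fin k) ℝ) (D : Matrix (Fin l) (Fin l) ℝ)
    (M : Matrix (Fin l) (Fin k) ℝ)
    (hC : C.PosDef)
    (hSchur : (D - (2 : ℝ) • (M * C⁻¹ * Mᵀ)).PosDef)
    (E : Matrix (Fin k ⊕ Fin l) (Fin k ⊕ Fin l) ℝ)
    (hE : E = Matrix.fromBlocks C ((2 : ℝ) • Mᵀ) M D) :
    ∀ μ : ℂ,
      (μ • (1 : Matrix (Fin k ⊕ Fin l) (Fin k ⊕ Fin l) ℂ) -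
          E.map Complex.ofReal).det = 0 → ∃ r : ℝ, 0 < r ∧ μ = (r : ℂ) := by
  intro μ hμ
  set s : ℝ := √2
  have hs : s ≠ 0 := by positivity
  have hss : s * s = 2 := Real.mul_self_sqrt zero_le_two
  set F := fromBlocks C (s • Mᵀ) (s • Mᵀ)ᴴ D
  have hF : F.PosDef := by
    have hschur : (s • Mᵀ)ᴴ * C⁻¹ * (s • Mᵀ) = (2 : ℝ) • (M * C⁻¹ * Mᵀ) := by
      simp [conjTranspose_eq_transpose_of_trivial, smul_smul, hss, Matrix.mul_assoc]
    exact PosDef.fromBlocks₁₁_of_posDef_schur _ D hC (hschur ▸ hSchur)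
  have hEF : E.charpoly = F.charpoly := by
    rw [← charpoly_fromBlocks_smul_smul_inv hs, hE]
    congr 2
    · simp [smul_smul, hss]
    · simp [conjTranspose_eq_transpose_of_trivial, smul_smul, hs]
  apply hF.exists_pos_eq_of_isRoot_charpoly_map
  rwa [← hEF, IsRoot, ← det_smul_one_sub_map_eq_eval_charpoly]

/-- if `C` is symmetric positive definite, `D` is symmetric, and
`D − 2 M C⁻¹ Mᵀ` is positive definite, then every complex eigenvalue of
`E = [[C, 2Mᵀ], [M, D]]` is real and positive. -/
theorem stmt14 (k l : ℕ)
    (C : Matrix (Fin k) (Fin k) ℝ) (D : Matrix (Fin l) (Fin l) ℝ)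
    (M : Matrix (Fin l) (Fin k) ℝ)
    (hC : C.PosDef) (hD : D.IsSymm)
    (hSchur : (D - (2 : ℝ) • (M * C⁻¹ * Mᵀ)).PosDef)
    (E : Matrix (Fin k ⊕ Fin l) (Fin k ⊕ Fin l) ℝ)
    (hE : E = Matrix.fromBlocks C ((2 : ℝ) • Mᵀ) M D) :
    ∀ μ : ℂ,
      (μ • (1 : Matrix (Fin k ⊕ Fin l) (Fin k ⊕ Fin l) ℂ) -
          E.map Complex.ofReal).det = 0 → ∃ r : ℝ, 0 < r ∧ μ = (r : ℂ) :=
  stmt14_general k l C D M hC hSchur E hE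
end

section
/- Let n be a positive integer and let D be the n×(n−1) real matrix with entries D_{i,i} = 1 for 1 ≤ i ≤ n−1, D_{i+1,i} = −1 for 1 ≤ i ≤ n−1, and all other entries zero (the one-dimensional discrete difference matrix arising from the MAC discretization with Dirichlet boundary conditions). Then the n² × (2n² − 2n) block matrix B̄ = [I_n ⊗ D, D ⊗ I_n] (where ⊗ denotes the Kronecker product) has rank n² − 1, and hence the null space of B̄ has dimension (n − 1)². -/
/-!
`B̄ᵀ` is the discrete gradient on the `n × n` grid: it sends `y` to the differences of `y` along
every row and every column.  Its kernel therefore consists of the functions that are constant on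
every row and every column, i.e. the constants, so `rank B̄ = rank B̄ᵀ = n² - 1`.  Rank–nullity
for `B̄`, which has `2n(n - 1)` columns, then gives a null space of dimension
`2n(n - 1) - (n² - 1) = (n - 1)²`.
-/

open Matrix Kronecker

section Kronecker

variable {R l m n p : Type*} [CommSemiring R] [Fintype p] [DecidableEq p]

theorem Matrix.one_kronecker_mulVec_apply [Fintype n] (A : Matrix m n R)
    (y : p × n → R) (i : p) (k : m) :
    ((1 : Matrix p p R) ⊗ₖ A *ᵥ y) (i, k) = (A *ᵥ fun j => y (i, j)) k := by
  simp [mulVec, dotProduct, Fintype.sum_prod_type, one_apply, ite_mul]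

theorem Matrix.kronecker_one_mulVec_apply [Fintype n] (A : Matrix m n R)
    (y : n × p → R) (k : m) (i : p) :
    (A ⊗ₖ (1 : Matrix p p R) *ᵥ y) (k, i) = (A *ᵥ fun j => y (j, i)) k := by
  simp [mulVec, dotProduct, Fintype.sum_prod_type, one_apply, mul_ite]

theorem Matrix.transpose_fromCols_kronecker_mulVec_eq_zero_iff [Fintype l] [DecidableEq l]
    (A : Matrix l m R) (B : Matrix p n R) (y : p × l → R) :
    (fromCols ((1 : Matrix p p R) ⊗ₖ A) (B ⊗ₖ (1 : Matrix l l R)))ᵀ *ᵥ y = 0 ↔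
      (∀ i, Aᵀ *ᵥ (fun j => y (i, j)) = 0) ∧ ∀ j, Bᵀ *ᵥ (fun i => y (i, j)) = 0 := by
  rw [transpose_fromCols, fromRows_mulVec, ← Sum.elim_zero_zero, Sum.elim_eq_iff,
    ← kroneckerMap_transpose, ← kroneckerMap_transpose, transpose_one, transpose_one]
  simp only [funext_iff, Prod.forall, one_kronecker_mulVec_apply, kronecker_one_mulVec_apply,
    Pi.zero_apply]
  exact and_congr Iff.rfl forall_comm

end Kronecker

theorem Matrix.rank_add_finrank_ker {K m n : Type*} [Field K] [Fintype n] (A : Matrix m n K) :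
    A.rank + Module.finrank K (LinearMap.ker A.mulVecLin) = Fintype.card n := by
  rw [rank, LinearMap.finrank_range_add_finrank_ker, Module.finrank_fintype_fun_eq_card]

/-- The matrix `D` for `n = m + 1`; indexing its columns by `Fin m` avoids the truncated `n - 1`. -/
def diffMatrix (R : Type*) [Ring R] (m : ℕ) : Matrix (Fin (m + 1)) (Fin m) R :=
  of fun i j => if i = j.castSucc then 1 else if i = j.succ then -1 else 0

section diffMatrix

variable {R : Type*} [Ring R] {m : ℕ}

theorem diffMatrix_transpose_mulVec_apply (f : Fin (m + 1) → R) (j : Fin m) :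
    ((diffMatrix R m)ᵀ *ᵥ f) j = f j.castSucc - f j.succ := by
  simp [diffMatrix, mulVec, dotProduct, ite_mul, Finset.sum_ite, Finset.filter_eq',
    Finset.filter_ne', (Fin.castSucc_lt_succ (i := j)).ne', sub_eq_add_neg]

theorem diffMatrix_transpose_mulVec_eq_zero_iff (f : Fin (m + 1) → R) :
    (diffMatrix R m)ᵀ *ᵥ f = 0 ↔ ∀ i, f i = f 0 := by
  simp only [funext_iff, diffMatrix_transpose_mulVec_apply, Pi.zero_apply, sub_eq_zero]
  refine ⟨fun h i => ?_, fun h j => (h _).trans (h _).symm⟩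
  induction i using Fin.induction with
  | zero => rfl
  | succ j ih => rw [← h, ih]

end diffMatrix

def gridDivergence (R : Type*) [CommRing R] (m : ℕ) :
    Matrix (Fin (m + 1) × Fin (m + 1)) ((Fin (m + 1) × Fin m) ⊕ (Fin m × Fin (m + 1))) R :=
  fromCols (1 ⊗ₖ diffMatrix R m) (diffMatrix R m ⊗ₖ 1)

theorem gridDivergence_transpose_mulVec_eq_zero_iff {R : Type*} [CommRing R] {m : ℕ}
    (y : Fin (m + 1) × Fin (m + 1) → R) :
    (gridDivergence R m)ᵀ *ᵥ y = 0 ↔ ∀ p, y p = y 0 := by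
  simp only [gridDivergence, transpose_fromCols_kronecker_mulVec_eq_zero_iff,
    diffMatrix_transpose_mulVec_eq_zero_iff]
  refine ⟨fun ⟨hrow, hcol⟩ ⟨i, j⟩ => (hrow i j).trans (hcol 0 i), fun h => ⟨?_, ?_⟩⟩ <;>
    exact fun _ _ => (h _).trans (h _).symm

theorem ker_gridDivergence_transpose {K : Type*} [Field K] (m : ℕ) :
    LinearMap.ker (gridDivergence K m)ᵀ.mulVecLin = K ∙ 1 := by
  ext y
  rw [LinearMap.mem_ker, mulVecLin_apply, gridDivergence_transpose_mulVec_eq_zero_iff,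
    Submodule.mem_span_singleton]
  refine ⟨fun h => ⟨y 0, funext fun p => by simp [h p]⟩, ?_⟩
  rintro ⟨c, rfl⟩ p
  rfl

/-- with `D` the `n × (n−1)` bidiagonal difference matrix
(`D i i = 1`, `D (i+1) i = −1`), the matrix `B̄ = [I_n ⊗ D, D ⊗ I_n]` has rank
`n² − 1`, and its null space has dimension `(n − 1)²`. -/
theorem stmt15 (n : ℕ) (hn : 0 < n)
    (D : Matrix (Fin n) (Fin (n - 1)) ℝ)
    (hD : ∀ (i : Fin n) (j : Fin (n - 1)),
      D i j = if (i : ℕ) = (j : ℕ) then 1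
        else if (i : ℕ) = (j : ℕ) + 1 then -1 else 0)
    (Bbar : Matrix (Fin n × Fin n)
      ((Fin n × Fin (n - 1)) ⊕ (Fin (n - 1) × Fin n)) ℝ)
    (hB : Bbar = Matrix.fromCols
      ((1 : Matrix (Fin n) (Fin n) ℝ) ⊗ₖ D)
      (D ⊗ₖ (1 : Matrix (Fin n) (Fin n) ℝ))) :
    Bbar.rank = n ^ 2 - 1 ∧
    Module.finrank ℝ (LinearMap.ker Bbar.mulVecLin) = (n - 1) ^ 2 := by
  obtain ⟨m, rfl⟩ : ∃ m, n = m + 1 := ⟨n - 1, by omega⟩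
  obtain rfl : D = diffMatrix ℝ m := by
    ext i j
    rw [hD]
    simp [diffMatrix, Fin.ext_iff]
  replace hB : Bbar = gridDivergence ℝ m := hB
  have hker : Module.finrank ℝ (LinearMap.ker Bbarᵀ.mulVecLin) = 1 := by
    rw [hB, ker_gridDivergence_transpose, finrank_span_singleton one_ne_zero]
  have hrankT := rank_add_finrank_ker Bbarᵀ
  have hrank := rank_add_finrank_ker Bbar
  rw [rank_transpose, hker] at hrankT
  simp only [Fintype.card_sum, Fintype.card_prod, Fintype.card_fin, Nat.add_sub_cancel]
    at hrankT hrank ⊢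
  refine ⟨by rw [sq]; omega, by linarith⟩
end
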